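/- Let n ≥ 3 and let f = (f_0, …, f_n) be given by f_k = a_0^{n−k} b_0^k + a_1^{n−k} b_1^k, where v_0 = (a_0, b_0) and v_1 = (a_1, b_1) are linearly independent vectors in ℂ². Then f ∈ 𝒜₃ if and only if there exist ε ∈ {1, −1} and r ∈ {0,1,2,3} such that a_1·(√2·a_0 + ε·i·b_0) = b_1·(ε·i·a_0 − √2·b_0), a_1^n = i^r·(ε·i·a_0 − √2·b_0)^n, and b_1^n = i^r·(√2·a_0 + ε·i·b_0)^n. -/

import Mathlib

/-- `α = (1 + i)/√2`, a primitive 8th root of unity with `α² = i`. -/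
noncomputable def alpha : ℂ := (1 + Complex.I) / (Real.sqrt 2 : ℂ)

/-- `f ∈ 𝒜₃`: there exist `H ∈ O₂(ℂ)`, a nonzero `c ∈ ℂ`, and `r ∈ {0,1,2,3}` such that
`f = c ((H(1,α))^{⊗n} + i^r (H(1,-α))^{⊗n})`. -/
def MemA3 (n : ℕ) (f : ℕ → ℂ) : Prop :=
  ∃ (H : Matrix (Fin 2) (Fin 2) ℂ) (c : ℂ) (r : ℕ),
    H.transpose * H = 1 ∧ c ≠ 0 ∧ r ≤ 3 ∧
    ∀ k ≤ n, f k =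
      c * (H.mulVec ![1, alpha] 0 ^ (n - k) * H.mulVec ![1, alpha] 1 ^ k +
        Complex.I ^ r *
          (H.mulVec ![1, -alpha] 0 ^ (n - k) * H.mulVec ![1, -alpha] 1 ^ k))

/-!
An element of `𝒜₃` is `c (u^{⊗n} + i^r w^{⊗n})` with `(u, w) = (H(1, α), H(1, -α))` for an
orthogonal `H`; equivalently `u ⬝ u = w ⬝ w = 1 + i` and `u ⬝ w = 1 - i`, and these Gram relations
say exactly that `w = -ε (ε i + √2 J) u` for a sign `ε`, where `J (a, b) = (-b, a)`.
For `n ≥ 3` the `n`-th tensor powers of at most four pairwise non-parallel vectors of `ℂ²` are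
linearly independent, so `v₀^{⊗n} + v₁^{⊗n} = c u^{⊗n} + c i^r w^{⊗n}` forces `{v₀, v₁}` to be
`{u, w}` up to scalars with prescribed `n`-th powers. Hence `v₁` is `(ε i + √2 J) v₀` times a scalar
whose `n`-th power is a fourth root of unity, which is the stated condition. Conversely, given such
a `v₁`, rescale `v₀` to `u` with `u ⬝ u = 1 + i`, put `w = -ε (ε i + √2 J) u` and build `H` from
`u` and `w`.
-/

open Complex Matrix

def wedge (x y : Fin 2 → ℂ) : ℂ := x 0 * y 1 - x 1 * y 0

def tensorPow (n : ℕ) (v : Fin 2 → ℂ) (k : ℕ) : ℂ := v 0 ^ (n - k) * v 1 ^ k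

theorem wedge_comm (x y : Fin 2 → ℂ) : wedge y x = -wedge x y := by
  unfold wedge; ring

theorem wedge_smul_left (t : ℂ) (x y : Fin 2 → ℂ) : wedge (t • x) y = t * wedge x y := by
  simp only [wedge, Pi.smul_apply, smul_eq_mul]; ring

theorem wedge_smul_right (t : ℂ) (x y : Fin 2 → ℂ) : wedge x (t • y) = t * wedge x y := by
  simp only [wedge, Pi.smul_apply, smul_eq_mul]; ring

theorem wedge_self (x : Fin 2 → ℂ) : wedge x x = 0 := by
  unfold wedge; ring

theorem ne_zero_of_wedge_ne_zero_left {x y : Fin 2 → ℂ} (h : wedge x y ≠ 0) : x ≠ 0 := by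
  rintro rfl; simp [wedge] at h

theorem ne_zero_of_wedge_ne_zero_right {x y : Fin 2 → ℂ} (h : wedge x y ≠ 0) : y ≠ 0 := by
  rintro rfl; simp [wedge] at h

theorem exists_eq_smul_of_wedge_eq_zero {x y : Fin 2 → ℂ} (h : wedge x y = 0) (hx : x ≠ 0) :
    ∃ t : ℂ, y = t • x := by
  by_cases h0 : x 0 = 0
  · have h1 : x 1 ≠ 0 := fun h1 => hx (by ext i; fin_cases i <;> assumption)
    refine ⟨y 1 / x 1, ?_⟩
    ext i; fin_cases i
    · have : x 1 * y 0 = 0 := by simpa [wedge, h0] using h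
      simp [(mul_eq_zero.1 this).resolve_left h1, h0]
    · simp [h1]
  · refine ⟨y 0 / x 0, ?_⟩
    ext i; fin_cases i
    · simp [h0]
    · simp only [wedge] at h
      simp only [Fin.mk_one, Pi.smul_apply, smul_eq_mul]
      rw [div_mul_eq_mul_div, eq_div_iff h0]
      linear_combination h

theorem wedge_ne_zero_of_linearIndependent {a₀ b₀ a₁ b₁ : ℂ}
    (h : LinearIndependent ℂ ![(a₀, b₀), (a₁, b₁)]) : wedge ![a₀, b₀] ![a₁, b₁] ≠ 0 := by
  have h' := h.map' (LinearEquiv.finTwoArrow ℂ ℂ).symm.toLinearMap (LinearEquiv.ker _)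
  have hA : IsUnit !![a₀, b₀; a₁, b₁] := by
    rw [← linearIndependent_rows_iff_isUnit]
    convert h' using 2
    · ext i j; fin_cases i <;> fin_cases j <;> rfl
    all_goals rfl
  rw [isUnit_iff_isUnit_det, det_fin_two_of, isUnit_iff_ne_zero] at hA
  simpa [wedge, mul_comm] using hA

theorem tensorPow_smul {n k : ℕ} (hk : k ≤ n) (t : ℂ) (v : Fin 2 → ℂ) :
    tensorPow n (t • v) k = t ^ n * tensorPow n v k := by
  simp only [tensorPow, Pi.smul_apply, smul_eq_mul, mul_pow]
  rw [← Nat.sub_add_cancel hk, pow_add t, Nat.add_sub_cancel]; ring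

theorem contract_tensorPow {n k : ℕ} (hk : k ≤ n) (v z : Fin 2 → ℂ) :
    z 1 * tensorPow (n + 1) v k - z 0 * tensorPow (n + 1) v (k + 1) =
      wedge v z * tensorPow n v k := by
  simp only [tensorPow, wedge]
  rw [show n + 1 - k = n - k + 1 by omega, show n + 1 - (k + 1) = n - k by omega]
  ring

theorem eq_zero_of_mul_pow_eq_zero {n : ℕ} {v : Fin 2 → ℂ} {c : ℂ} (hv : v ≠ 0)
    (h₀ : c * v 0 ^ n = 0) (h₁ : c * v 1 ^ n = 0) : c = 0 := by
  by_cases hv₀ : v 0 = 0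
  · have hv₁ : v 1 ≠ 0 := fun hv₁ => hv (by ext i; fin_cases i <;> assumption)
    simpa [hv₁] using h₁
  · simpa [hv₀] using h₀

theorem sum_mul_wedge_mul_tensorPow {ι : Type*} [Fintype ι] {n k : ℕ} (hk : k ≤ n)
    (c : ι → ℂ) (v : ι → Fin 2 → ℂ) (z : Fin 2 → ℂ) :
    ∑ i, c i * wedge (v i) z * tensorPow n (v i) k =
      z 1 * ∑ i, c i * tensorPow (n + 1) (v i) k -
        z 0 * ∑ i, c i * tensorPow (n + 1) (v i) (k + 1) := by
  rw [Finset.mul_sum, Finset.mul_sum, ← Finset.sum_sub_distrib]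
  refine Finset.sum_congr rfl fun i _ => ?_
  rw [mul_assoc, ← contract_tensorPow hk]; ring

/-- Contracting with `v_m, …, v₁` in turn kills those summands and multiplies the
`v₀`-summand by the wedges. -/
theorem coeff_mul_prod_wedge_eq_zero {m n : ℕ} (hmn : m ≤ n) (v : Fin (m + 1) → Fin 2 → ℂ)
    (c : Fin (m + 1) → ℂ) (hv : v 0 ≠ 0) (h : ∀ k ≤ n, ∑ i, c i * tensorPow n (v i) k = 0) :
    c 0 * ∏ j : Fin m, wedge (v 0) (v j.succ) = 0 := by
  induction m generalizing n with
  | zero =>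
    simpa using eq_zero_of_mul_pow_eq_zero hv (by simpa [tensorPow] using h 0 (Nat.zero_le n))
      (by simpa [tensorPow] using h n le_rfl)
  | succ m ih =>
    obtain ⟨n, rfl⟩ : ∃ n', n = n' + 1 := ⟨n - 1, by omega⟩
    set z := v (Fin.last _)
    have key := ih (n := n) (by omega) (fun i => v i.castSucc)
      (fun i => c i.castSucc * wedge (v i.castSucc) z) hv fun k hk => by
        have hz := sum_mul_wedge_mul_tensorPow hk c v z
        rw [h k (by omega), h (k + 1) (by omega), mul_zero, mul_zero, sub_zero,
          Fin.sum_univ_castSucc, wedge_self, mul_zero, zero_mul, add_zero] at hz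
        exact hz
    rw [Fin.prod_univ_castSucc, Fin.succ_last]
    simp only [Fin.succ_castSucc, Fin.castSucc_zero] at key ⊢
    linear_combination key


section Matching

variable {n : ℕ} {v₀ v₁ u w : Fin 2 → ℂ} {p q : ℂ}

theorem exists_smul_of_tensorPow_add_eq_of_wedge_eq_zero (hn : 2 ≤ n) (hv : wedge v₀ v₁ ≠ 0)
    (huw : wedge u w ≠ 0)
    (h : ∀ k ≤ n, tensorPow n v₀ k + tensorPow n v₁ k = p * tensorPow n u k + q * tensorPow n w k)
    (hu : wedge u v₀ = 0) :
    ∃ σ τ : ℂ, v₀ = σ • u ∧ v₁ = τ • w ∧ σ ^ n = p ∧ τ ^ n = q := by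
  obtain ⟨σ, rfl⟩ := exists_eq_smul_of_wedge_eq_zero hu (ne_zero_of_wedge_ne_zero_left huw)
  have hv₁u : wedge v₁ u ≠ 0 := by
    rw [wedge_smul_left] at hv
    rw [wedge_comm]
    exact neg_ne_zero.2 (right_ne_zero_of_mul hv)
  have h₁ := coeff_mul_prod_wedge_eq_zero (m := 2) hn ![v₁, u, w] ![1, σ ^ n - p, -q]
    (ne_zero_of_wedge_ne_zero_right hv) fun k hk => by
      rw [Fin.sum_univ_three]
      show 1 * tensorPow n v₁ k + (σ ^ n - p) * tensorPow n u k + -q * tensorPow n w k = 0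
      linear_combination h k hk - tensorPow_smul hk σ u
  rw [Fin.prod_univ_two] at h₁
  change 1 * (wedge v₁ u * wedge v₁ w) = 0 at h₁
  rw [one_mul] at h₁
  have hv₁w : wedge w v₁ = 0 := by
    rw [wedge_comm, (mul_eq_zero.1 h₁).resolve_left hv₁u, neg_zero]
  obtain ⟨τ, rfl⟩ := exists_eq_smul_of_wedge_eq_zero hv₁w (ne_zero_of_wedge_ne_zero_right huw)
  have h' : ∀ k ≤ n, (σ ^ n - p) * tensorPow n u k + (τ ^ n - q) * tensorPow n w k = 0 :=
    fun k hk => by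
      linear_combination h k hk - tensorPow_smul hk σ u - tensorPow_smul hk τ w
  have hσ := coeff_mul_prod_wedge_eq_zero (m := 1) (n := n) (by omega) ![u, w]
    ![σ ^ n - p, τ ^ n - q] (ne_zero_of_wedge_ne_zero_left huw) fun k hk => by
      rw [Fin.sum_univ_two]; exact h' k hk
  have hτ := coeff_mul_prod_wedge_eq_zero (m := 1) (n := n) (by omega) ![w, u]
    ![τ ^ n - q, σ ^ n - p] (ne_zero_of_wedge_ne_zero_right huw) fun k hk => by
      rw [Fin.sum_univ_two, add_comm]; exact h' k hk
  rw [Fin.prod_univ_one] at hσ hτ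
  change (σ ^ n - p) * wedge u w = 0 at hσ
  change (τ ^ n - q) * wedge w u = 0 at hτ
  rw [wedge_comm, mul_neg, neg_eq_zero] at hτ
  exact ⟨σ, τ, rfl, rfl, sub_eq_zero.1 ((mul_eq_zero.1 hσ).resolve_right huw),
    sub_eq_zero.1 ((mul_eq_zero.1 hτ).resolve_right huw)⟩

theorem tensorPow_add_eq_cases (hn : 3 ≤ n) (hv : wedge v₀ v₁ ≠ 0) (huw : wedge u w ≠ 0)
    (h : ∀ k ≤ n, tensorPow n v₀ k + tensorPow n v₁ k = p * tensorPow n u k + q * tensorPow n w k) :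
    (∃ σ τ : ℂ, v₀ = σ • u ∧ v₁ = τ • w ∧ σ ^ n = p ∧ τ ^ n = q) ∨
      (∃ σ τ : ℂ, v₀ = σ • w ∧ v₁ = τ • u ∧ σ ^ n = q ∧ τ ^ n = p) := by
  have h₀ := coeff_mul_prod_wedge_eq_zero (m := 3) hn ![v₀, v₁, u, w] ![1, 1, -p, -q]
    (ne_zero_of_wedge_ne_zero_left hv) fun k hk => by
      rw [Fin.sum_univ_four]
      show 1 * tensorPow n v₀ k + 1 * tensorPow n v₁ k + -p * tensorPow n u k +
        -q * tensorPow n w k = 0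
      linear_combination h k hk
  rw [Fin.prod_univ_three] at h₀
  change 1 * (wedge v₀ v₁ * wedge v₀ u * wedge v₀ w) = 0 at h₀
  rw [one_mul, mul_assoc] at h₀
  rcases mul_eq_zero.1 ((mul_eq_zero.1 h₀).resolve_left hv) with hu | hw
  · left
    exact exists_smul_of_tensorPow_add_eq_of_wedge_eq_zero (by omega) hv huw h
      (by rw [wedge_comm, hu, neg_zero])
  · right
    rw [wedge_comm] at huw
    exact exists_smul_of_tensorPow_add_eq_of_wedge_eq_zero (by omega) hv (neg_ne_zero.1 huw)
      (fun k hk => by rw [h k hk, add_comm]) (by rw [wedge_comm, hw, neg_zero])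

end Matching

section Twist

theorem sqrt_two_sq : (Real.sqrt 2 : ℂ) ^ 2 = 2 := by
  norm_cast; rw [Real.sq_sqrt zero_le_two]

theorem alpha_sq : alpha ^ 2 = I := by
  rw [alpha, div_pow, sqrt_two_sq]
  linear_combination I_sq / 2

/-- Multiplication by `ε i + √2 J`, where `J (a, b) = (-b, a)`. -/
noncomputable def twist (ε : ℂ) (v : Fin 2 → ℂ) : Fin 2 → ℂ :=
  ![ε * I * v 0 - Real.sqrt 2 * v 1, Real.sqrt 2 * v 0 + ε * I * v 1]

variable {ε : ℂ}

theorem twist_smul (t : ℂ) (v : Fin 2 → ℂ) : twist ε (t • v) = t • twist ε v := by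
  simp only [twist, smul_vec2, Pi.smul_apply, smul_eq_mul]
  exact vec2_eq (by ring) (by ring)

theorem twist_ne_zero (hε : ε ^ 2 = 1) {v : Fin 2 → ℂ} (hv : v ≠ 0) : twist ε v ≠ 0 := by
  intro h
  have h₀ : ε * I * v 0 - Real.sqrt 2 * v 1 = 0 := by simpa [twist] using congrFun h 0
  have h₁ : Real.sqrt 2 * v 0 + ε * I * v 1 = 0 := by simpa [twist] using congrFun h 1
  have hv₀ : v 0 = 0 := by
    linear_combination ε * I * h₀ + Real.sqrt 2 * h₁ - I ^ 2 * v 0 * hε - v 0 * I_sq -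
      v 0 * sqrt_two_sq
  have hv₁ : v 1 = 0 := by
    linear_combination ε * I * h₁ - Real.sqrt 2 * h₀ - I ^ 2 * v 1 * hε - v 1 * I_sq -
      v 1 * sqrt_two_sq
  exact hv (by ext i; fin_cases i <;> assumption)

theorem twist_dotProduct_twist (hε : ε ^ 2 = 1) (x y : Fin 2 → ℂ) :
    twist ε x ⬝ᵥ twist ε y = x ⬝ᵥ y := by
  simp only [vec2_dotProduct, twist, cons_val_zero, cons_val_one, cons_val_fin_one]
  linear_combination (x 0 * y 0 + x 1 * y 1) * (I ^ 2 * hε + I_sq + sqrt_two_sq)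

theorem dotProduct_twist_self (x : Fin 2 → ℂ) : x ⬝ᵥ twist ε x = ε * I * (x ⬝ᵥ x) := by
  simp only [vec2_dotProduct, twist, cons_val_zero, cons_val_one, cons_val_fin_one]
  ring

theorem wedge_twist_self (x : Fin 2 → ℂ) : wedge x (twist ε x) = Real.sqrt 2 * (x ⬝ᵥ x) := by
  simp only [wedge, vec2_dotProduct, twist, cons_val_zero, cons_val_one, cons_val_fin_one]
  ring

end Twist

theorem dotProduct_mulVec_mulVec_of_transpose_mul_self {H : Matrix (Fin 2) (Fin 2) ℂ}
    (hH : Hᵀ * H = 1) (x y : Fin 2 → ℂ) : (H *ᵥ x) ⬝ᵥ (H *ᵥ y) = x ⬝ᵥ y := by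
  rw [dotProduct_mulVec, ← vecMul_transpose, vecMul_vecMul, hH, vecMul_one]

theorem exists_orthogonal_iff {u w : Fin 2 → ℂ} :
    (∃ H : Matrix (Fin 2) (Fin 2) ℂ, Hᵀ * H = 1 ∧ H *ᵥ ![1, alpha] = u ∧
      H *ᵥ ![1, -alpha] = w) ↔ u ⬝ᵥ u = 1 + I ∧ w ⬝ᵥ w = 1 + I ∧ u ⬝ᵥ w = 1 - I := by
  constructor
  · rintro ⟨H, hH, rfl, rfl⟩
    simp only [dotProduct_mulVec_mulVec_of_transpose_mul_self hH, vec2_dotProduct, cons_val_zero,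
      cons_val_one, cons_val_fin_one]
    exact ⟨by linear_combination alpha_sq, by linear_combination alpha_sq,
      by linear_combination -alpha_sq⟩
  · rintro ⟨huu, hww, huw⟩
    rw [vec2_dotProduct] at huu hww huw
    -- columns `(u + w) / 2` and `(u - w) / (2 α)`, as `-(i α) = α⁻¹`
    refine ⟨!![(u 0 + w 0) / 2, -(I * alpha) * (u 0 - w 0) / 2;
      (u 1 + w 1) / 2, -(I * alpha) * (u 1 - w 1) / 2], ?_, ?_, ?_⟩
    · ext i j
      fin_cases i <;> fin_cases j <;>
        simp only [Matrix.mul_apply, Fin.sum_univ_two, transpose_apply, of_apply, cons_val',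
          cons_val_zero, cons_val_one, cons_val_fin_one, Fin.zero_eta, Fin.mk_one, one_fin_two]
      · linear_combination (huu + 2 * huw + hww) / 4
      · linear_combination -(I * alpha) / 4 * (huu - hww)
      · linear_combination -(I * alpha) / 4 * (huu - hww)
      · linear_combination I ^ 2 * alpha ^ 2 / 4 * (huu - 2 * huw + hww) + I ^ 3 * alpha_sq +
          (I ^ 2 - 1) * I_sq
    · ext i; fin_cases i <;>
        simp only [mulVec, vec2_dotProduct, of_apply, cons_val', cons_val_zero, cons_val_one,
          cons_val_fin_one, Fin.zero_eta, Fin.mk_one]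
      · linear_combination -(I * (u 0 - w 0)) / 2 * alpha_sq - (u 0 - w 0) / 2 * I_sq
      · linear_combination -(I * (u 1 - w 1)) / 2 * alpha_sq - (u 1 - w 1) / 2 * I_sq
    · ext i; fin_cases i <;>
        simp only [mulVec, vec2_dotProduct, of_apply, cons_val', cons_val_zero, cons_val_one,
          cons_val_fin_one, Fin.zero_eta, Fin.mk_one]
      · linear_combination (I * (u 0 - w 0)) / 2 * alpha_sq + (u 0 - w 0) / 2 * I_sq
      · linear_combination (I * (u 1 - w 1)) / 2 * alpha_sq + (u 1 - w 1) / 2 * I_sq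


section GramRelations

theorem exists_I_pow_eq_iff {z : ℂ} : (∃ r ≤ 3, I ^ r = z) ↔ z ^ 4 = 1 := by
  constructor
  · rintro ⟨r, -, rfl⟩
    rw [← pow_mul, mul_comm, pow_mul, I_pow_four, one_pow]
  · intro hz
    have h : (z - 1) * (z + 1) * (z - I) * (z + I) = 0 := by
      linear_combination hz - (z ^ 2 - 1) * I_sq
    rcases mul_eq_zero.1 h with h | h
    · rcases mul_eq_zero.1 h with h | h
      · rcases mul_eq_zero.1 h with h | h
        · exact ⟨0, by norm_num, by linear_combination -h⟩
        · exact ⟨2, by norm_num, by linear_combination I_sq - h⟩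
      · exact ⟨1, by norm_num, by linear_combination -h⟩
    · exact ⟨3, by norm_num, by linear_combination I * I_sq - h⟩

theorem memA3_iff {n : ℕ} {f : ℕ → ℂ} :
    MemA3 n f ↔ ∃ (u w : Fin 2 → ℂ) (c z : ℂ),
      (u ⬝ᵥ u = 1 + I ∧ w ⬝ᵥ w = 1 + I ∧ u ⬝ᵥ w = 1 - I) ∧ c ≠ 0 ∧ z ^ 4 = 1 ∧
        ∀ k ≤ n, f k = c * (tensorPow n u k + z * tensorPow n w k) := by
  constructor
  · rintro ⟨H, c, r, hH, hc, hr, hf⟩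
    exact ⟨_, _, c, I ^ r, exists_orthogonal_iff.1 ⟨H, hH, rfl, rfl⟩, hc,
      exists_I_pow_eq_iff.1 ⟨r, hr, rfl⟩, hf⟩
  · rintro ⟨u, w, c, z, hdot, hc, hz, hf⟩
    obtain ⟨H, hH, rfl, rfl⟩ := exists_orthogonal_iff.2 hdot
    obtain ⟨r, hr, rfl⟩ := exists_I_pow_eq_iff.2 hz
    exact ⟨H, c, r, hH, hc, hr, hf⟩

theorem wedge_sq (u w : Fin 2 → ℂ) : wedge u w ^ 2 = (u ⬝ᵥ u) * (w ⬝ᵥ w) - (u ⬝ᵥ w) ^ 2 := by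
  simp only [wedge, vec2_dotProduct]; ring

variable {u w : Fin 2 → ℂ}

theorem wedge_ne_zero_of_dotProduct (huu : u ⬝ᵥ u = 1 + I) (hww : w ⬝ᵥ w = 1 + I)
    (huw : u ⬝ᵥ w = 1 - I) : wedge u w ≠ 0 := by
  intro h
  have h4 := wedge_sq u w
  rw [h, huu, hww, huw] at h4
  have hI : (4 : ℂ) * I = 0 := by linear_combination -h4
  simp at hI

theorem exists_eq_neg_smul_twist (huu : u ⬝ᵥ u = 1 + I) (hww : w ⬝ᵥ w = 1 + I)
    (huw : u ⬝ᵥ w = 1 - I) : ∃ ε : ℂ, ε ^ 2 = 1 ∧ w = -ε • twist ε u := by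
  -- `(u ⬝ᵥ u) w = (u ⬝ᵥ w) u + d J u` with `d = wedge u w` and `d ^ 2 = 4 i`, so
  -- `w = -i u + d / (1 + i) J u`; `ε` is chosen with `-ε √2 = d / (1 + i)`.
  set d := wedge u w with hd
  have hd2 : d ^ 2 = 4 * I := by
    rw [hd, wedge_sq, huu, hww, huw]; ring
  rw [vec2_dotProduct] at huu huw
  have key₀ : (1 + I) * w 0 = (1 - I) * u 0 - d * u 1 := by
    rw [hd, wedge]; linear_combination u 0 * huw - w 0 * huu
  have key₁ : (1 + I) * w 1 = (1 - I) * u 1 + d * u 0 := by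
    rw [hd, wedge]; linear_combination u 1 * huw - w 1 * huu
  set ε : ℂ := -d * (1 - I) * Real.sqrt 2 / 4
  have hε : ε ^ 2 = 1 := by
    linear_combination (d ^ 2 * (1 - I) ^ 2 / 16) * sqrt_two_sq + ((1 - I) ^ 2 / 8) * hd2 +
      ((I - 2) / 2) * I_sq
  refine ⟨ε, hε, ?_⟩
  refine funext fun i => ?_
  fin_cases i
  · show w 0 = -ε * (ε * I * u 0 - Real.sqrt 2 * u 1)
    linear_combination I * u 0 * hε + (d * (1 - I) * u 1 / 4) * sqrt_two_sq +
      ((1 - I) / 2) * key₀ + ((w 0 + u 0) / 2) * I_sq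
  · show w 1 = -ε * (Real.sqrt 2 * u 0 + ε * I * u 1)
    linear_combination I * u 1 * hε - (d * (1 - I) * u 0 / 4) * sqrt_two_sq +
      ((1 - I) / 2) * key₁ + ((w 1 + u 1) / 2) * I_sq

end GramRelations

section TwistedPartner

def IsTwistedPartner (n : ℕ) (v₀ v₁ : Fin 2 → ℂ) : Prop :=
  ∃ ε ζ : ℂ, ε ^ 2 = 1 ∧ (ζ ^ n) ^ 4 = 1 ∧ v₁ = ζ • twist ε v₀

variable {n : ℕ} {v₀ v₁ : Fin 2 → ℂ} {f : ℕ → ℂ}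

theorem mul_pow_pow_four_eq_one {η ζ : ℂ} (hη : η ^ 2 = 1) (hζ : (ζ ^ n) ^ 4 = 1) :
    ((η * ζ) ^ n) ^ 4 = 1 := by
  calc ((η * ζ) ^ n) ^ 4 = ((η ^ 2) ^ 2) ^ n * (ζ ^ n) ^ 4 := by ring
    _ = 1 := by rw [hη, hζ]; ring

theorem isTwistedPartner_smul_smul {x y : Fin 2 → ℂ} {ε σ τ : ℂ} (hε : ε ^ 2 = 1)
    (hy : y = -ε • twist ε x) (hσ : σ ≠ 0) (hστ : (τ ^ n / σ ^ n) ^ 4 = 1) :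
    IsTwistedPartner n (σ • x) (τ • y) := by
  refine ⟨ε, -ε * (τ / σ), hε, mul_pow_pow_four_eq_one (by rw [neg_sq, hε])
    (by rwa [div_pow]), ?_⟩
  rw [hy, smul_smul, twist_smul, smul_smul]
  congr 1
  field_simp

theorem isTwistedPartner_of_memA3 (hn : 3 ≤ n) (hv : wedge v₀ v₁ ≠ 0)
    (hf : ∀ k ≤ n, f k = tensorPow n v₀ k + tensorPow n v₁ k) (h : MemA3 n f) :
    IsTwistedPartner n v₀ v₁ := by
  obtain ⟨u, w, c, z, ⟨huu, hww, huw⟩, hc, hz, hfc⟩ := memA3_iff.1 h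
  obtain ⟨ε, hε, hw⟩ := exists_eq_neg_smul_twist huu hww huw
  obtain ⟨ε', hε', hu⟩ := exists_eq_neg_smul_twist hww huu (by rw [dotProduct_comm, huw])
  rcases tensorPow_add_eq_cases hn hv (wedge_ne_zero_of_dotProduct huu hww huw) (p := c)
    (q := c * z) (fun k hk => by rw [← hf k hk, hfc k hk]; ring) with
    ⟨σ, τ, rfl, rfl, hσc, hτc⟩ | ⟨σ, τ, rfl, rfl, hσc, hτc⟩
  · refine isTwistedPartner_smul_smul hε hw (ne_zero_pow (by omega) (hσc ▸ hc)) ?_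
    rw [hσc, hτc, mul_div_cancel_left₀ _ hc, hz]
  · have hz₀ : z ≠ 0 := by rintro rfl; norm_num at hz
    refine isTwistedPartner_smul_smul hε' hu
      (ne_zero_pow (by omega) (hσc ▸ mul_ne_zero hc hz₀)) ?_
    rw [hσc, hτc, div_pow, mul_pow, hz, mul_one, div_self (pow_ne_zero _ hc)]

theorem memA3_of_isTwistedPartner (hv : wedge v₀ v₁ ≠ 0)
    (hf : ∀ k ≤ n, f k = tensorPow n v₀ k + tensorPow n v₁ k) (h : IsTwistedPartner n v₀ v₁) :
    MemA3 n f := by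
  obtain ⟨ε, ζ, hε, hζ, rfl⟩ := h
  -- rescale `v₀` to `u` with `u ⬝ᵥ u = 1 + i` and take `w = -ε • twist ε u`
  have hQ : v₀ ⬝ᵥ v₀ ≠ 0 := by
    rw [wedge_smul_right, wedge_twist_self] at hv
    exact right_ne_zero_of_mul (right_ne_zero_of_mul hv)
  obtain ⟨s, hs⟩ := IsAlgClosed.exists_pow_nat_eq ((v₀ ⬝ᵥ v₀) / (1 + I)) two_pos
  have hI : (1 : ℂ) + I ≠ 0 := by
    intro h; simpa using congrArg im h
  have hs₀ : s ≠ 0 := by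
    rintro rfl; exact div_ne_zero hQ hI (by rw [← hs]; ring)
  obtain ⟨u, rfl, huu⟩ : ∃ u, v₀ = s • u ∧ u ⬝ᵥ u = 1 + I := by
    refine ⟨s⁻¹ • v₀, by rw [smul_smul, mul_inv_cancel₀ hs₀, one_smul], ?_⟩
    have hQs : v₀ ⬝ᵥ v₀ = s ^ 2 * (1 + I) := by rw [hs]; field_simp
    rw [smul_dotProduct, dotProduct_smul, smul_eq_mul, smul_eq_mul, hQs]
    field_simp
  have hεε : (-ε) ^ n * (-ε) ^ n = 1 := by rw [← mul_pow, neg_mul_neg, ← sq, hε, one_pow]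
  refine memA3_iff.2 ⟨u, -ε • twist ε u, s ^ n, (-ε * ζ) ^ n, ⟨huu, ?_, ?_⟩, pow_ne_zero _ hs₀,
    ?_, fun k hk => ?_⟩
  · rw [smul_dotProduct, dotProduct_smul, twist_dotProduct_twist hε, huu, smul_eq_mul,
      smul_eq_mul]
    linear_combination (1 + I) * hε
  · rw [dotProduct_smul, dotProduct_twist_self, huu, smul_eq_mul]
    linear_combination (-(I * (1 + I))) * hε - I_sq
  · exact mul_pow_pow_four_eq_one (by rw [neg_sq, hε]) hζ
  · rw [hf k hk, twist_smul, smul_smul, tensorPow_smul hk, tensorPow_smul hk,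
      tensorPow_smul hk, mul_pow, mul_pow]
    linear_combination -(ζ ^ n * s ^ n * tensorPow n (twist ε u) k) * hεε

end TwistedPartner

theorem exists_eq_twist_iff_isTwistedPartner {n : ℕ} {a₀ b₀ a₁ b₁ : ℂ} (hv₀ : ![a₀, b₀] ≠ 0) :
    (∃ (ε : ℂ) (r : ℕ), (ε = 1 ∨ ε = -1) ∧ r ≤ 3 ∧
        a₁ * ((Real.sqrt 2 : ℂ) * a₀ + ε * I * b₀) = b₁ * (ε * I * a₀ - (Real.sqrt 2 : ℂ) * b₀) ∧
        a₁ ^ n = I ^ r * (ε * I * a₀ - (Real.sqrt 2 : ℂ) * b₀) ^ n ∧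
        b₁ ^ n = I ^ r * ((Real.sqrt 2 : ℂ) * a₀ + ε * I * b₀) ^ n) ↔
      IsTwistedPartner n ![a₀, b₀] ![a₁, b₁] := by
  simp only [← sq_eq_one_iff]
  constructor
  · rintro ⟨ε, r, hε, hr, h, ha, hb⟩
    have hp := twist_ne_zero hε hv₀
    obtain ⟨ζ, hζ⟩ := exists_eq_smul_of_wedge_eq_zero (y := ![a₁, b₁])
      (by
        show (ε * I * a₀ - Real.sqrt 2 * b₀) * b₁ - (Real.sqrt 2 * a₀ + ε * I * b₀) * a₁ = 0
        linear_combination -h) hp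
    have ha₁ : a₁ = ζ * (ε * I * a₀ - Real.sqrt 2 * b₀) := congrFun hζ 0
    have hb₁ : b₁ = ζ * (Real.sqrt 2 * a₀ + ε * I * b₀) := congrFun hζ 1
    have hζn : ζ ^ n = I ^ r := by
      rw [← sub_eq_zero]
      refine eq_zero_of_mul_pow_eq_zero (n := n) hp ?_ ?_
      · show (ζ ^ n - I ^ r) * (ε * I * a₀ - Real.sqrt 2 * b₀) ^ n = 0
        rw [ha₁, mul_pow] at ha
        linear_combination ha
      · show (ζ ^ n - I ^ r) * (Real.sqrt 2 * a₀ + ε * I * b₀) ^ n = 0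
        rw [hb₁, mul_pow] at hb
        linear_combination hb
    exact ⟨ε, ζ, hε, exists_I_pow_eq_iff.1 ⟨r, hr, hζn.symm⟩, hζ⟩
  · rintro ⟨ε, ζ, hε, hζ, h⟩
    obtain ⟨r, hr, hζn⟩ := exists_I_pow_eq_iff.2 hζ
    have ha₁ : a₁ = ζ * (ε * I * a₀ - Real.sqrt 2 * b₀) := congrFun h 0
    have hb₁ : b₁ = ζ * (Real.sqrt 2 * a₀ + ε * I * b₀) := congrFun h 1
    refine ⟨ε, r, hε, hr, by rw [ha₁, hb₁]; ring, ?_, ?_⟩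
    · rw [ha₁, mul_pow, hζn]
    · rw [hb₁, mul_pow, hζn]

/-- **Characterization of `𝒜₃`.**
Let `f = v₀^{⊗n} + v₁^{⊗n}` with `v₀ = (a₀, b₀)`, `v₁ = (a₁, b₁)` linearly independent and
`n ≥ 3`. Then `f ∈ 𝒜₃` iff there exist `ε ∈ {1, −1}` and `r ∈ {0,1,2,3}` such that
`a₁ (√2 a₀ + ε i b₀) = b₁ (ε i a₀ − √2 b₀)`, `a₁ⁿ = i^r (ε i a₀ − √2 b₀)ⁿ`, and
`b₁ⁿ = i^r (√2 a₀ + ε i b₀)ⁿ`. -/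
theorem stmt_15 (n : ℕ) (hn : 3 ≤ n) (a₀ b₀ a₁ b₁ : ℂ)
    (hli : LinearIndependent ℂ ![(a₀, b₀), (a₁, b₁)]) (f : ℕ → ℂ)
    (hf : ∀ k ≤ n, f k = a₀ ^ (n - k) * b₀ ^ k + a₁ ^ (n - k) * b₁ ^ k) :
    MemA3 n f ↔
      ∃ (ε : ℂ) (r : ℕ), (ε = 1 ∨ ε = -1) ∧ r ≤ 3 ∧
        a₁ * ((Real.sqrt 2 : ℂ) * a₀ + ε * Complex.I * b₀) =
          b₁ * (ε * Complex.I * a₀ - (Real.sqrt 2 : ℂ) * b₀) ∧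
        a₁ ^ n = Complex.I ^ r * (ε * Complex.I * a₀ - (Real.sqrt 2 : ℂ) * b₀) ^ n ∧
        b₁ ^ n = Complex.I ^ r * ((Real.sqrt 2 : ℂ) * a₀ + ε * Complex.I * b₀) ^ n := by
  have hv : wedge ![a₀, b₀] ![a₁, b₁] ≠ 0 := wedge_ne_zero_of_linearIndependent hli
  have hf' : ∀ k ≤ n, f k = tensorPow n ![a₀, b₀] k + tensorPow n ![a₁, b₁] k := hf
  rw [exists_eq_twist_iff_isTwistedPartner (ne_zero_of_wedge_ne_zero_left hv)]
  exact ⟨isTwistedPartner_of_memA3 hn hv hf', memA3_of_isTwistedPartner hv hf'⟩
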